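/- Gautschi's inequality: for every real x > 0 and every s ∈ (0,1), x^{1-s} < Γ(x+1)/Γ(x+s) < (x+1)^{1-s}. -/
import Mathlib

open Real Set

lemma strictConvexOn_log_Gamma' : StrictConvexOn ℝ (Set.Ioi 0) (Real.log ∘ Real.Gamma) := by
  refine ⟨convex_Ioi 0, fun x hx y hy hxy a b ha hb hab => ?_⟩
  simp only [Function.comp_apply, smul_eq_mul]
  have hx' : (0:ℝ) < x := hx
  have hy' : (0:ℝ) < y := hy
  have hz : 0 < a * x + b * y := by positivity
  have key : ∀ t : ℝ, 0 < t →
      Real.log (Real.Gamma t) = Real.log (Real.Gamma (t + 1)) - Real.log t := by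
    intro t ht
    rw [Real.Gamma_add_one ht.ne', Real.log_mul ht.ne' (Real.Gamma_pos_of_pos ht).ne']
    ring
  rw [key _ hz, key _ hx', key _ hy']
  have h1 : Real.log (Real.Gamma (a * x + b * y + 1)) ≤
      a * Real.log (Real.Gamma (x + 1)) + b * Real.log (Real.Gamma (y + 1)) := by
    have h := Real.convexOn_log_Gamma.2 (show x + 1 ∈ Set.Ioi (0:ℝ) by simp; linarith)
      (show y + 1 ∈ Set.Ioi (0:ℝ) by simp; linarith) ha.le hb.le hab
    simp only [Function.comp_apply, smul_eq_mul] at h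
    have : a * (x + 1) + b * (y + 1) = a * x + b * y + 1 := by
      have : a + b = 1 := hab; nlinarith
    rwa [this] at h
  have h2 : a * Real.log x + b * Real.log y < Real.log (a * x + b * y) := by
    have := strictConcaveOn_log_Ioi.2 hx hy hxy ha hb hab
    simpa using this
  linarith

/-- Gautschi's inequality: for every real `x > 0` and every `s ∈ (0,1)`,
`x^(1-s) < Γ(x+1)/Γ(x+s) < (x+1)^(1-s)`. -/
theorem gautschi_inequality (x s : ℝ) (hx : 0 < x) (hs : s ∈ Set.Ioo (0 : ℝ) 1) :
    x ^ (1 - s) < Real.Gamma (x + 1) / Real.Gamma (x + s) ∧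
      Real.Gamma (x + 1) / Real.Gamma (x + s) < (x + 1) ^ (1 - s) := by
  obtain ⟨hs0, hs1⟩ := hs
  have hxs : 0 < x + s := by linarith
  have hΓx : 0 < Real.Gamma x := Real.Gamma_pos_of_pos hx
  have hΓx1 : 0 < Real.Gamma (x + 1) := Real.Gamma_pos_of_pos (by linarith)
  have hΓxs : 0 < Real.Gamma (x + s) := Real.Gamma_pos_of_pos hxs
  have hΓxs1 : 0 < Real.Gamma (x + s + 1) := Real.Gamma_pos_of_pos (by linarith)
  -- Lower bound: Γ(x+s) < Γ(x)^(1-s) * Γ(x+1)^s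
  have hlow : Real.Gamma (x + s) < Real.Gamma x ^ (1 - s) * Real.Gamma (x + 1) ^ s := by
    have h := strictConvexOn_log_Gamma'.2 (show x ∈ Set.Ioi (0:ℝ) from hx)
      (show x + 1 ∈ Set.Ioi (0:ℝ) by simp; linarith)
      (by linarith : x ≠ x + 1) (by linarith : 0 < 1 - s) hs0 (by ring)
    simp only [Function.comp_apply, smul_eq_mul] at h
    have heq : (1 - s) * x + s * (x + 1) = x + s := by ring
    rw [heq] at h
    have := Real.exp_lt_exp.mpr h
    rwa [Real.exp_log hΓxs, Real.exp_add, ← Real.log_rpow hΓx, ← Real.log_rpow hΓx1,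
      Real.exp_log (Real.rpow_pos_of_pos hΓx _), Real.exp_log (Real.rpow_pos_of_pos hΓx1 _)]
      at this
  -- Upper bound: Γ(x+1) < Γ(x+s)^s * Γ(x+s+1)^(1-s)
  have hup : Real.Gamma (x + 1) < Real.Gamma (x + s) ^ s * Real.Gamma (x + s + 1) ^ (1 - s) := by
    have h := strictConvexOn_log_Gamma'.2 (show x + s ∈ Set.Ioi (0:ℝ) from hxs)
      (show x + s + 1 ∈ Set.Ioi (0:ℝ) by simp; linarith)
      (by linarith : x + s ≠ x + s + 1) hs0 (by linarith : 0 < 1 - s) (by ring)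
    simp only [Function.comp_apply, smul_eq_mul] at h
    have heq : s * (x + s) + (1 - s) * (x + s + 1) = x + 1 := by ring
    rw [heq] at h
    have := Real.exp_lt_exp.mpr h
    rwa [Real.exp_log hΓx1, Real.exp_add, ← Real.log_rpow hΓxs, ← Real.log_rpow hΓxs1,
      Real.exp_log (Real.rpow_pos_of_pos hΓxs _), Real.exp_log (Real.rpow_pos_of_pos hΓxs1 _)]
      at this
  constructor
  · rw [lt_div_iff₀ hΓxs]
    calc x ^ (1 - s) * Real.Gamma (x + s)
        < x ^ (1 - s) * (Real.Gamma x ^ (1 - s) * Real.Gamma (x + 1) ^ s) := by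
          exact (mul_lt_mul_iff_right₀ (Real.rpow_pos_of_pos hx _)).mpr hlow
      _ = (x * Real.Gamma x) ^ (1 - s) * Real.Gamma (x + 1) ^ s := by
          rw [Real.mul_rpow hx.le hΓx.le]; ring
      _ = Real.Gamma (x + 1) := by
          rw [← Real.Gamma_add_one hx.ne', ← Real.rpow_add hΓx1]
          norm_num
  · rw [div_lt_iff₀ hΓxs]
    calc Real.Gamma (x + 1)
        < Real.Gamma (x + s) ^ s * Real.Gamma (x + s + 1) ^ (1 - s) := hup
      _ = (x + s) ^ (1 - s) * (Real.Gamma (x + s) ^ s * Real.Gamma (x + s) ^ (1 - s)) := by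
          rw [Real.Gamma_add_one hxs.ne', Real.mul_rpow hxs.le hΓxs.le]; ring
      _ = (x + s) ^ (1 - s) * Real.Gamma (x + s) := by
          rw [← Real.rpow_add hΓxs]; norm_num
      _ ≤ (x + 1) ^ (1 - s) * Real.Gamma (x + s) := by
          have h : (x + s) ^ (1 - s) ≤ (x + 1) ^ (1 - s) :=
            Real.rpow_le_rpow hxs.le (by linarith) (by linarith)
          exact mul_le_mul_of_nonneg_right h hΓxs.le
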